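/- arXiv:0903.2100 — 8 statements merged into one kernel-verified Lean document; each statement's English description precedes it below -/
import Mathlib

section
/- Let E be a finite set and P a set of partitions of E. A set Br of subsets of E is a P-bramble if and only if it is a P↑-bramble, where P↑ is the closure of P under merging of partitions. -/
open Set

variable {E : Type*}

/-- A partition of `E`: pairwise disjoint nonempty parts covering `E`. -/
def IsPartitionOf (μ : Set (Set E)) : Prop :=
  (∀ A ∈ μ, A.Nonempty) ∧ μ.PairwiseDisjoint id ∧ ⋃₀ μ = Set.univ

/-- The least superset of `P` closed under merging of partitions:
from `(α|A)` and `(Aᶜ|β)` one obtains `(α|β)`. -/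
inductive MergeClosure (P : Set (Set (Set E))) : Set (Set E) → Prop
  | base {μ : Set (Set E)} : μ ∈ P → MergeClosure P μ
  | merge {α β : Set (Set E)} {A : Set E} (hA : A ∉ α) (hB : Aᶜ ∉ β) :
      MergeClosure P (insert A α) → MergeClosure P (insert Aᶜ β) →
      MergeClosure P (α ∪ β)

/-- A `Q`-bramble: pairwise intersecting sets meeting every partition in `Q`. -/
def IsBramble (Q : Set (Set (Set E))) (Br : Set (Set E)) : Prop :=
  (∀ X ∈ Br, ∀ Y ∈ Br, (X ∩ Y).Nonempty) ∧ ∀ μ ∈ Q, ∃ X ∈ μ, X ∈ Br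

/-- Deletion: remove one element from one member, dropping it if it becomes empty. -/
def DelStep (β α : Set (Set E)) : Prop :=
  ∃ B ∈ β, ∃ b ∈ B, α = (β \ {B}) ∪ {X | X = B \ {b} ∧ X.Nonempty}

/-- Partition step: replace one member by a partition of it. -/
def SplitStep (β α : Set (Set E)) : Prop :=
  ∃ B ∈ β, ∃ δ : Set (Set E), (∀ D ∈ δ, D.Nonempty) ∧ δ.PairwiseDisjoint id ∧
    ⋃₀ δ = B ∧ α = (β \ {B}) ∪ δ

/-- `α` is finer than `β`: obtained by a sequence of deletions and partitions. -/
def Finer (α β : Set (Set E)) : Prop :=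
  Relation.ReflTransGen (fun x y => DelStep x y ∨ SplitStep x y) β α

/-- `α` is strongly finer than `β`: obtained by deletions only. -/
def StronglyFiner (α β : Set (Set E)) : Prop :=
  Relation.ReflTransGen DelStep β α

/-- A family of small sets: downward closed. -/
def DownClosed (S : Set (Set E)) : Prop := ∀ X ∈ S, ∀ Y, Y ⊆ X → Y ∈ S

def Refining (Q : Set (Set (Set E))) : Prop :=
  ∀ (α β : Set (Set E)) (A B : Set E), A ∉ α → B ∉ β →
    insert A α ∈ Q → insert B β ∈ Q → A ∩ B = ∅ →
    ∃ μ ∈ Q, Finer μ (α ∪ β)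

def Dualising (Q : Set (Set (Set E))) : Prop :=
  ∀ S : Set (Set E), DownClosed S →
    (∃ μ ∈ Q, ∀ X ∈ μ, X ∈ S) ∨ (∃ Br, IsBramble Q Br ∧ ∀ X ∈ Br, X ∉ S)

/-- `α∖F`: remove the elements of `F` from every part, discarding emptied parts. -/
def RemoveF (α : Set (Set E)) (F : Set E) : Set (Set E) :=
  {X | ∃ A ∈ α, X = A \ F ∧ X.Nonempty}

def Pushing (P : Set (Set (Set E))) : Prop :=
  ∀ (α β : Set (Set E)) (A B : Set E), A ∉ α → B ∉ β →
    insert A α ∈ P → insert B β ∈ P → (Aᶜ ∩ Bᶜ).Nonempty →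
    ∃ F : Set E, F.Nonempty ∧ F ⊆ Aᶜ ∩ Bᶜ ∧
      (insert (A ∪ F) (RemoveF α F) ∈ P ∨ insert (B ∪ F) (RemoveF β F) ∈ P)

/-- Weakly submodular partition function (new sense). -/
def WeaklySubmodular (Ψ : Set (Set E) → EReal) : Prop :=
  ∀ (α β : Set (Set E)) (A B : Set E), A ∉ α → B ∉ β →
    IsPartitionOf (insert A α) → IsPartitionOf (insert B β) →
    (Aᶜ ∩ Bᶜ).Nonempty →
    ∃ F : Set E, F.Nonempty ∧ F ⊆ Aᶜ ∩ Bᶜ ∧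
      (Ψ (insert (A ∪ F) (RemoveF α F)) ≤ Ψ (insert A α) ∨
       Ψ (insert (B ∪ F) (RemoveF β F)) ≤ Ψ (insert B β))

/-- Submodular partition function. -/
def SubmodularPF (Ψ : Set (Set E) → EReal) : Prop :=
  ∀ (α β : Set (Set E)) (A B : Set E), A ∉ α → B ∉ β →
    IsPartitionOf (insert A α) → IsPartitionOf (insert B β) →
    Ψ (insert (A ∪ Bᶜ) (RemoveF α Bᶜ)) + Ψ (insert (B ∪ Aᶜ) (RemoveF β Aᶜ))
      ≤ Ψ (insert A α) + Ψ (insert B β)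

/-- The overlap: elements belonging to at least two members. -/
def Overlap (α : Set (Set E)) : Set E :=
  {x | ∃ X ∈ α, ∃ Y ∈ α, X ≠ Y ∧ x ∈ X ∧ x ∈ Y}

/-- A connectivity function: symmetric and submodular. -/
def ConnFn (f : Set E → EReal) : Prop :=
  (∀ X, f X = f Xᶜ) ∧ ∀ X Y, f (X ∪ Y) + f (X ∩ Y) ≤ f X + f Y

/-- The partition function `max_f`. -/
noncomputable def maxPF (f : Set E → EReal) (μ : Set (Set E)) : EReal := sSup (f '' μ)

theorem IsBramble.anti {Q Q' : Set (Set (Set E))} {Br : Set (Set E)} (hQ : Q ⊆ Q')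
    (h : IsBramble Q' Br) : IsBramble Q Br :=
  ⟨h.1, fun μ hμ => h.2 μ (hQ hμ)⟩

theorem IsBramble.compl_notMem {Q : Set (Set (Set E))} {Br : Set (Set E)} (h : IsBramble Q Br)
    {A : Set E} (hA : A ∈ Br) : Aᶜ ∉ Br := fun hAc => by
  simpa using h.1 A hA Aᶜ hAc

/-- A member of `Br` in `(α|A)` or in `(Aᶜ|β)` survives in `(α|β)`, since `A` and `Aᶜ` cannot
both belong to `Br`. -/
theorem IsBramble.exists_mem_of_mergeClosure {P : Set (Set (Set E))} {Br : Set (Set E)}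
    (h : IsBramble P Br) {μ : Set (Set E)} (hμ : MergeClosure P μ) : ∃ X ∈ μ, X ∈ Br := by
  induction hμ with
  | base hμ => exact h.2 _ hμ
  | @merge α β A _ _ _ _ ihA ihAc =>
    obtain ⟨X, rfl | hXα, hXBr⟩ := ihA
    · obtain ⟨Y, rfl | hYβ, hYBr⟩ := ihAc
      · exact absurd hYBr (h.compl_notMem hXBr)
      · exact ⟨Y, Or.inr hYβ, hYBr⟩
    · exact ⟨X, Or.inl hXα, hXBr⟩

theorem bramble_iff_mergeClosure_bramble_general
    (P : Set (Set (Set E))) (Br : Set (Set E)) :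
    IsBramble P Br ↔ IsBramble {μ | MergeClosure P μ} Br :=
  ⟨fun h => ⟨h.1, fun _ hμ => h.exists_mem_of_mergeClosure hμ⟩,
    IsBramble.anti fun _ => MergeClosure.base⟩

/-- `Br` is a `P`-bramble iff it is a `P↑`-bramble. -/
theorem bramble_iff_mergeClosure_bramble [Finite E]
    (P : Set (Set (Set E))) (hP : ∀ μ ∈ P, IsPartitionOf μ) (Br : Set (Set E)) :
    IsBramble P Br ↔ IsBramble {μ | MergeClosure P μ} Br :=
  bramble_iff_mergeClosure_bramble_general P Br
end

section
/- If a set Q of partitions of a finite set E is refining, then Q is dualising: for every set S of small sets (a subset of the powerset of E closed under taking subsets), either Q contains a partition all of whose parts are in S, or there exists a Q-bramble none of whose elements is in S. -/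
open Set

variable {E : Type*}

/-!
Suppose no partition in `Q` is small. Take a maximal family `T` of big, pairwise intersecting
sets such that every partition in `Q` still has a big part meeting all members of `T`; these
"good" sets form an up-closed family `G`. The key claim is that every `σ₀ ∈ Q` has a good part
meeting some good part of every partition in `Q`: adding it to `T` keeps `T` admissible, so by
maximality it lies in `T`, and `T` is a bramble.

The claim is proved by a minimal counterexample `ρ`, minimizing the union of its good parts.
Some partition `σ ∈ Q` avoids a good part `P₀` of `ρ` with all its good parts. Starting from `σ`,
repeatedly merge the current partition with `ρ` along a good part disjoint from `P₀`; since `Q`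
is refining and good sets are up-closed, each good part of the merge lies in a good part of one
of the two merged partitions. This ends with some `κ ∈ Q` whose good parts all lie in good parts
of `ρ` other than `P₀`, so `κ` is again a counterexample, with a strictly smaller union of good
parts.
-/

lemma DelStep.isCofinalFor {α β : Set (Set E)} (h : DelStep β α) : IsCofinalFor α β := by
  obtain ⟨B, hB, b, -, rfl⟩ := h
  rintro X (hX | ⟨rfl, -⟩)
  · exact ⟨X, hX.1, subset_rfl⟩
  · exact ⟨B, hB, sdiff_subset⟩

lemma SplitStep.isCofinalFor {α β : Set (Set E)} (h : SplitStep β α) : IsCofinalFor α β := by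
  obtain ⟨B, hB, δ, -, -, rfl, rfl⟩ := h
  rintro X (hX | hX)
  · exact ⟨X, hX.1, subset_rfl⟩
  · exact ⟨⋃₀ δ, hB, subset_sUnion_of_mem hX⟩

lemma Finer.isCofinalFor {α β : Set (Set E)} (h : Finer α β) : IsCofinalFor α β := by
  induction h with
  | refl => exact IsCofinalFor.rfl
  | tail _ hstep ih =>
    exact (hstep.elim DelStep.isCofinalFor SplitStep.isCofinalFor).trans ih

lemma IsCofinalFor.inter_isUpperSet {α : Type*} [Preorder α] {s t u : Set α}
    (h : IsCofinalFor s t) (hu : IsUpperSet u) : IsCofinalFor (s ∩ u) (t ∩ u) :=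
  fun _ ha ↦ let ⟨b, hb, hab⟩ := h ha.1; ⟨b, ⟨hb, hu hab ha.2⟩, hab⟩

lemma IsPartitionOf.sUnion_diff_singleton_ssubset {μ s : Set (Set E)} {A : Set E}
    (hμ : IsPartitionOf μ) (hs : s ⊆ μ) (hA : A ∈ s) : ⋃₀ (s \ {A}) ⊂ ⋃₀ s := by
  refine (sUnion_mono sdiff_subset).ssubset_of_not_subset fun hsub ↦ ?_
  obtain ⟨x, hx⟩ := hμ.1 A (hs hA)
  obtain ⟨B, ⟨hB, hBA⟩, hxB⟩ := hsub (subset_sUnion_of_mem hA hx)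
  exact disjoint_left.mp (hμ.2.1 (hs hB) (hs hA) hBA) hxB hx

lemma Refining.exists_isCofinalFor_of_disjoint {Q : Set (Set (Set E))} (h : Refining Q)
    {μ ν : Set (Set E)} {A B : Set E} (hμ : μ ∈ Q) (hν : ν ∈ Q) (hA : A ∈ μ) (hB : B ∈ ν)
    (hAB : Disjoint A B) : ∃ π ∈ Q, IsCofinalFor π (μ \ {A} ∪ ν \ {B}) := by
  obtain ⟨π, hπ, hfin⟩ := h (μ \ {A}) (ν \ {B}) A B (fun hA' ↦ hA'.2 rfl) (fun hB' ↦ hB'.2 rfl)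
    (by rwa [insert_sdiff_singleton, insert_eq_of_mem hA])
    (by rwa [insert_sdiff_singleton, insert_eq_of_mem hB]) (disjoint_iff_inter_eq_empty.mp hAB)
  exact ⟨π, hπ, hfin.isCofinalFor⟩


section Descent

variable [Finite E] {Q : Set (Set (Set E))} {G : Set (Set E)}

theorem Refining.exists_isCofinalFor_inter_diff_singleton (hQ : ∀ μ ∈ Q, IsPartitionOf μ)
    (h : Refining Q) (hG : IsUpperSet G) {ρ σ : Set (Set E)} {P₀ : Set E} (hρ : ρ ∈ Q)
    (hP₀ : P₀ ∈ ρ) (hσ : σ ∈ Q) (hσP₀ : ∀ Z ∈ σ ∩ G, Disjoint Z P₀) :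
    ∃ κ ∈ Q, IsCofinalFor (κ ∩ G) (ρ \ {P₀} ∩ G) := by
  let C := {κ ∈ Q | ∀ Z ∈ κ ∩ G, Disjoint Z P₀}
  -- the parts in `G` not yet inside a part in `G` of `ρ \ {P₀}`
  let stray (κ : Set (Set E)) := {Z ∈ κ ∩ G | ¬ ∃ P ∈ ρ \ {P₀} ∩ G, Z ⊆ P}
  obtain ⟨κ, hmin⟩ := (toFinite C).exists_minimalFor (fun κ ↦ ⋃₀ stray κ) C ⟨σ, hσ, hσP₀⟩
  have hκC : κ ∈ C := hmin.prop
  refine ⟨κ, hκC.1, fun Z hZ ↦ ?_⟩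
  by_contra hZstray
  -- merging `κ` and `ρ` along the disjoint parts `Z` and `P₀` shrinks the stray region
  obtain ⟨κ₁, hκ₁, hcof⟩ :=
    h.exists_isCofinalFor_of_disjoint hκC.1 hρ hZ.1 hP₀ (hκC.2 Z hZ)
  have hcofG := hcof.inter_isUpperSet hG
  have hκ₁C : κ₁ ∈ C := by
    refine ⟨hκ₁, fun X hX ↦ ?_⟩
    obtain ⟨Y, ⟨hY | hY, hYG⟩, hXY⟩ := hcofG hX
    · exact (hκC.2 Y ⟨hY.1, hYG⟩).mono_left hXY
    · exact ((hQ ρ hρ).2.1 hY.1 hP₀ hY.2).mono_left hXY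
  have hstray : IsCofinalFor (stray κ₁) (stray κ \ {Z}) := by
    rintro X ⟨hX, hXstray⟩
    obtain ⟨Y, ⟨hY | hY, hYG⟩, hXY⟩ := hcofG hX
    · refine ⟨Y, ⟨⟨⟨hY.1, hYG⟩, ?_⟩, hY.2⟩, hXY⟩
      rintro ⟨P, hP, hYP⟩
      exact hXstray ⟨P, hP, hXY.trans hYP⟩
    · exact absurd ⟨Y, ⟨hY, hYG⟩, hXY⟩ hXstray
  have hlt : ⋃₀ stray κ₁ < ⋃₀ stray κ :=
    (sSup_le_sSup_of_isCofinalFor hstray).trans_lt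
      ((hQ κ hκC.1).sUnion_diff_singleton_ssubset (fun _ hY ↦ hY.1.1) ⟨hZ, hZstray⟩)
  exact hmin.not_lt hκ₁C hlt

theorem Refining.exists_mem_inter_forall_exists_inter_nonempty (hQ : ∀ μ ∈ Q, IsPartitionOf μ)
    (h : Refining Q) (hG : IsUpperSet G) (hQG : ∀ σ ∈ Q, (σ ∩ G).Nonempty) {σ₀ : Set (Set E)}
    (hσ₀ : σ₀ ∈ Q) : ∃ P ∈ σ₀ ∩ G, ∀ σ ∈ Q, ∃ P' ∈ σ ∩ G, (P ∩ P').Nonempty := by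
  -- partitions each of whose parts in `G` is avoided by all parts in `G` of some partition
  let D := {ρ ∈ Q | ∀ P ∈ ρ ∩ G, ∃ σ ∈ Q, ∀ P' ∈ σ ∩ G, Disjoint P P'}
  by_contra hσ₀D
  simp only [← not_disjoint_iff_nonempty_inter, not_exists, not_and, not_forall, not_not,
    exists_prop] at hσ₀D
  obtain ⟨ρ, hmin⟩ := (toFinite D).exists_minimalFor (fun ρ ↦ ⋃₀ (ρ ∩ G)) D
    ⟨σ₀, hσ₀, fun P hP ↦ hσ₀D P hP⟩
  obtain ⟨hρQ, hρ⟩ : ρ ∈ D := hmin.prop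
  obtain ⟨P₀, hP₀⟩ := hQG ρ hρQ
  obtain ⟨σ, hσ, hσP₀⟩ := hρ P₀ hP₀
  obtain ⟨κ, hκ, hcof⟩ := h.exists_isCofinalFor_inter_diff_singleton hQ hG hρQ hP₀.1 hσ
    fun Z hZ ↦ (hσP₀ Z hZ).symm
  have hκD : κ ∈ D := by
    refine ⟨hκ, fun Z hZ ↦ ?_⟩
    obtain ⟨P, hP, hZP⟩ := hcof hZ
    obtain ⟨σ', hσ', hP⟩ := hρ P ⟨hP.1.1, hP.2⟩
    exact ⟨σ', hσ', fun P' hP' ↦ (hP P' hP').mono_left hZP⟩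
  have hlt : ⋃₀ (κ ∩ G) < ⋃₀ (ρ ∩ G) := by
    refine (sSup_le_sSup_of_isCofinalFor hcof).trans_lt ?_
    rw [← inter_sdiff_right_comm]
    exact (hQ ρ hρQ).sUnion_diff_singleton_ssubset inter_subset_left hP₀
  exact hmin.not_lt hκD hlt

end Descent

section Brambles

variable {S T : Set (Set E)}

def bigSetsMeeting (S T : Set (Set E)) : Set (Set E) :=
  {X | X ∉ S ∧ ∀ Y ∈ T, (X ∩ Y).Nonempty}

lemma DownClosed.isUpperSet_bigSetsMeeting (hS : DownClosed S) (T : Set (Set E)) :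
    IsUpperSet (bigSetsMeeting S T) :=
  fun X Y hXY hX ↦ ⟨fun hY ↦ hX.1 (hS Y hY X hXY),
    fun Z hZ ↦ (hX.2 Z hZ).mono (inter_subset_inter_left Z hXY)⟩

lemma bigSetsMeeting_insert (P : Set E) :
    bigSetsMeeting S (insert P T) = bigSetsMeeting S T ∩ {X | (X ∩ P).Nonempty} := by
  ext X
  simp only [bigSetsMeeting, forall_mem_insert, mem_inter_iff, mem_ofPred_eq]
  tauto

lemma insert_subset_bigSetsMeeting_insert {P : Set E} (hT : T ⊆ bigSetsMeeting S T)
    (hP : P ∈ bigSetsMeeting S T) (hPne : P.Nonempty) :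
    insert P T ⊆ bigSetsMeeting S (insert P T) := by
  obtain ⟨hPS, hPT⟩ := hP
  rw [bigSetsMeeting_insert, insert_subset_iff]
  exact ⟨⟨⟨hPS, hPT⟩, by simpa using hPne⟩,
    fun X hX ↦ ⟨hT hX, by simpa [inter_comm] using hPT X hX⟩⟩

end Brambles

/-- if `Q` is refining then `Q` is dualising. -/
theorem refining_dualising [Finite E]
    (Q : Set (Set (Set E))) (hQ : ∀ μ ∈ Q, IsPartitionOf μ)
    (h : Refining Q) : Dualising Q := by
  intro S hS
  by_cases hsmall : ∃ μ ∈ Q, ∀ X ∈ μ, X ∈ S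
  · exact .inl hsmall
  push Not at hsmall
  -- `T ⊆ bigSetsMeeting S T` says that `T` consists of big, pairwise intersecting sets
  let Admissible (T : Set (Set E)) : Prop :=
    T ⊆ bigSetsMeeting S T ∧ ∀ σ ∈ Q, (σ ∩ bigSetsMeeting S T).Nonempty
  obtain ⟨T, hT⟩ := (toFinite {T | Admissible T}).exists_maximal
    ⟨∅, empty_subset _, fun σ hσ ↦
      let ⟨X, hX, hXS⟩ := hsmall σ hσ; ⟨X, hX, hXS, fun _ h ↦ h.elim⟩⟩
  refine .inr ⟨T, ⟨fun X hX Y hY ↦ (hT.prop.1 hX).2 Y hY, fun σ hσ ↦ ?_⟩,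
    fun X hX ↦ (hT.prop.1 hX).1⟩
  obtain ⟨P, hP, hmeet⟩ := h.exists_mem_inter_forall_exists_inter_nonempty hQ
    (hS.isUpperSet_bigSetsMeeting T) hT.prop.2 hσ
  have hPT : Admissible (insert P T) := by
    refine ⟨insert_subset_bigSetsMeeting_insert hT.prop.1 hP.2 ((hQ σ hσ).1 P hP.1), ?_⟩
    intro σ' hσ'
    obtain ⟨P', hP', hPP'⟩ := hmeet σ' hσ'
    rw [bigSetsMeeting_insert]
    exact ⟨P', hP'.1, hP'.2, by rwa [mem_ofPred_eq, inter_comm]⟩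
  exact ⟨P, hP.1, hT.eq_of_subset hPT (subset_insert P T) ▸ mem_insert P T⟩
end

section
/- If a set Q of partitions of a finite set E is dualising, then Q is refining. -/
open Set

variable {E : Type*}

/-!
Take for `S` the sets contained in some part of `α ∪ β`; it is down-closed. A `Q`-bramble
avoiding `S` would have to contain `A` (the only part of `(α|A)` outside `S`) and likewise `B`,
which is impossible since `A ∩ B = ∅`. So some `μ ∈ Q` has all its parts in `S`, and such a `μ`
is finer than `α ∪ β`: split every part of `α ∪ β` into its traces on `μ`, then delete the
traces that are not parts of `μ`.
-/

section Deletion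

variable {μ ν K : Set (Set E)} {J : Set E} {b : E}

lemma StronglyFiner.finer {α β : Set (Set E)} (h : StronglyFiner α β) : Finer α β :=
  Relation.ReflTransGen.mono (fun _ _ => Or.inl) _ _ h

lemma delStep_insert (hJ : J ∉ ν) (hb : b ∈ J) :
    DelStep (insert J ν) (ν ∪ {X | X = J \ {b} ∧ X.Nonempty}) :=
  ⟨J, mem_insert J ν, b, hb, by rw [insert_sdiff_self_of_notMem hJ]⟩

lemma delStep_insert_of_nonempty (hJ : J ∉ ν) (hb : b ∈ J) (hne : (J \ {b}).Nonempty) :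
    DelStep (insert J ν) (insert (J \ {b}) ν) := by
  convert delStep_insert hJ hb using 1
  ext X
  simp only [mem_insert_iff, mem_union, mem_ofPred_eq]
  constructor
  · rintro (rfl | hX) <;> tauto
  · rintro (hX | ⟨rfl, -⟩) <;> tauto

lemma delStep_insert_singleton (hb : {b} ∉ ν) : DelStep (insert {b} ν) ν := by
  convert delStep_insert hb (mem_singleton b) using 1
  refine (union_eq_left.2 ?_).symm
  rintro X ⟨rfl, hne⟩
  simp at hne

lemma stronglyFiner_insert (hJf : J.Finite) (hJ : J.Nonempty) (hJν : J ∉ ν) :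
    StronglyFiner ν (insert J ν) := by
  induction J, hJf using Set.Finite.induction_on generalizing ν with
  | empty => exact absurd hJ not_nonempty_empty
  | @insert b J hbJ _ ih =>
    rcases J.eq_empty_or_nonempty with rfl | hJne
    · rw [insert_empty_eq] at hJν ⊢
      exact .single (delStep_insert_singleton hJν)
    · have hstep := delStep_insert_of_nonempty hJν (mem_insert b J)
        (by rwa [insert_sdiff_self_of_notMem hbJ])
      rw [insert_sdiff_self_of_notMem hbJ] at hstep
      by_cases hJν' : J ∈ ν
      · rw [insert_eq_of_mem hJν'] at hstep
        exact .single hstep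
      · exact .head hstep (ih hJne hJν')

lemma stronglyFiner_union [Finite E] (hK : K.Finite) (hne : ∀ J ∈ K, J.Nonempty) :
    StronglyFiner μ (μ ∪ K) := by
  induction K, hK using Set.Finite.induction_on with
  | empty => rw [union_empty]; exact .refl
  | @insert J K _ hKf ih =>
    have ih := ih fun X hX => hne X (mem_insert_of_mem J hX)
    rw [union_insert]
    by_cases hJ : J ∈ μ ∪ K
    · rwa [insert_eq_of_mem hJ]
    · exact (stronglyFiner_insert J.toFinite (hne J (mem_insert J K)) hJ).trans ih

end Deletion

section Traces

variable {μ ν γ : Set (Set E)} {C X : Set E}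

def traces (μ γ : Set (Set E)) : Set (Set E) :=
  {X | ∃ C ∈ γ, ∃ M ∈ μ, X = M ∩ C ∧ X.Nonempty}

lemma nonempty_of_mem_traces (hX : X ∈ traces μ γ) : X.Nonempty := by
  obtain ⟨-, -, -, -, -, hne⟩ := hX
  exact hne

lemma traces_empty : traces μ ∅ = ∅ := by
  simp [traces]

lemma traces_insert : traces μ (insert C γ) = traces μ {C} ∪ traces μ γ := by
  ext X
  simp [traces, or_and_right, exists_or]

lemma mem_traces_singleton_of_mem_traces (hC : C ∈ traces μ γ) : C ∈ traces μ {C} := by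
  obtain ⟨C', -, M, hM, hCM, hne⟩ := hC
  have hsub : C ⊆ M := by
    rw [hCM]
    exact inter_subset_left
  exact ⟨C, rfl, M, hM, (inter_eq_right.2 hsub).symm, hne⟩

lemma subset_traces (hne : ∀ M ∈ μ, M.Nonempty) (h : ∀ M ∈ μ, ∃ C ∈ γ, M ⊆ C) :
    μ ⊆ traces μ γ := fun M hM =>
  let ⟨C, hC, hMC⟩ := h M hM
  ⟨C, hC, M, hM, (inter_eq_left.2 hMC).symm, hne M hM⟩

lemma splitStep_traces_singleton (hμ : IsPartitionOf μ) (hC : C ∈ ν) :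
    SplitStep ν ((ν \ {C}) ∪ traces μ {C}) := by
  refine ⟨C, hC, traces μ {C}, fun _ => nonempty_of_mem_traces, ?_, ?_, rfl⟩
  · rintro - ⟨C₁, hC₁, M, hM, rfl, -⟩ - ⟨C₂, hC₂, M', hM', rfl, -⟩ hne
    rw [mem_singleton_iff] at hC₁ hC₂
    subst hC₁ hC₂
    have hMM' : M ≠ M' := by
      rintro rfl
      exact hne rfl
    exact (hμ.2.1 hM hM' hMM').mono inter_subset_left inter_subset_left
  · ext x
    constructor
    · rintro ⟨-, ⟨C', hC', M, -, rfl, -⟩, hx⟩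
      rw [mem_singleton_iff] at hC'
      exact hC' ▸ hx.2
    · intro hx
      obtain ⟨M, hM, hxM⟩ : x ∈ ⋃₀ μ := hμ.2.2 ▸ mem_univ x
      exact ⟨M ∩ C, ⟨C, rfl, M, hM, rfl, x, hxM, hx⟩, hxM, hx⟩

lemma finer_traces (hμ : IsPartitionOf μ) (hγ : γ.Finite) : Finer (traces μ γ) γ := by
  suffices Finer ((γ \ γ) ∪ traces μ γ) γ by rwa [sdiff_self, empty_union] at this
  refine Set.Finite.induction_on_subset
    (motive := fun t _ => Finer ((γ \ t) ∪ traces μ t) γ) γ hγ ?_ ?_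
  · rw [sdiff_empty, traces_empty, union_empty]
    exact .refl
  · intro C t hCγ _ hCt ih
    refine ih.tail (Or.inr ?_)
    convert splitStep_traces_singleton hμ (ν := (γ \ t) ∪ traces μ t) (Or.inl ⟨hCγ, hCt⟩) using 1
    rw [traces_insert]
    ext X
    simp only [mem_union, mem_sdiff, mem_insert_iff, mem_singleton_iff]
    by_cases hXC : X = C
    · subst hXC
      have hself := mem_traces_singleton_of_mem_traces (μ := μ) (γ := t) (C := X)
      tauto
    · tauto

theorem finer_of_forall_exists_superset [Finite E] (hμ : IsPartitionOf μ)
    (h : ∀ M ∈ μ, ∃ C ∈ γ, M ⊆ C) : Finer μ γ := by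
  have hdel : StronglyFiner μ (traces μ γ) := by
    simpa [union_sdiff_cancel (subset_traces hμ.1 h)] using
      stronglyFiner_union (μ := μ) (toFinite (traces μ γ \ μ))
        fun _ hJ => nonempty_of_mem_traces hJ.1
  exact (finer_traces hμ γ.toFinite).trans hdel.finer

end Traces

/-- if `Q` is dualising then `Q` is refining. -/
theorem dualising_refining [Finite E]
    (Q : Set (Set (Set E))) (hQ : ∀ μ ∈ Q, IsPartitionOf μ)
    (h : Dualising Q) : Refining Q := by
  intro α β A B _ _ hAQ hBQ hAB
  set S : Set (Set E) := {X | ∃ C ∈ α ∪ β, X ⊆ C}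
  have hS : DownClosed S := fun X ⟨C, hC, hXC⟩ Y hYX => ⟨C, hC, hYX.trans hXC⟩
  rcases h S hS with ⟨μ, hμQ, hμS⟩ | ⟨Br, ⟨hBr, hBrQ⟩, hBrS⟩
  · exact ⟨μ, hμQ, finer_of_forall_exists_superset (hQ μ hμQ) hμS⟩
  · have mem_bramble : ∀ {C γ}, γ ⊆ α ∪ β → insert C γ ∈ Q → C ∈ Br := by
      intro C γ hγ hCQ
      obtain ⟨X, rfl | hX, hXBr⟩ := hBrQ _ hCQ
      · exact hXBr
      · exact absurd ⟨X, hγ hX, subset_rfl⟩ (hBrS X hXBr)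
    obtain ⟨x, hx⟩ := hBr A (mem_bramble subset_union_left hAQ) B
      (mem_bramble subset_union_right hBQ)
    rw [hAB] at hx
    exact absurd hx (notMem_empty x)
end

section
/- For any partition (α|A) in P↑ \ P, there exists a partition (γ|C) in P with at least three parts and a partition (C^c|μ|A) in P↑ such that (α|A) = (γ|μ|A). -/
/-
Induct on a derivation of `(α|A)` in `P↑`. If its last step merges `(A₀|α₀)` and `(A₀ᶜ|β₀)`,
we may assume `A ∈ α₀`, the other case being symmetric. If `β₀ = {A₀}` the merge changes
nothing and induction applies to `(A₀|α₀)`. Otherwise `β₀` splits `A₀` into at least two parts,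
so `(A₀ᶜ|β₀)` has at least three. If it lies in `P`, it is the required `(γ|C)`, with `μ = α₀ ∖ {A}`.
If not, induction decomposes it at `A₀ᶜ` as `β₀ = γ ∪ μ` with `(Cᶜ|μ|A₀ᶜ) ∈ P↑`, and merging
this with `(A₀|α₀)` along `A₀ᶜ` gives `(Cᶜ|μ|α₀) ∈ P↑`.
-/

open Set

variable {E : Type*}

namespace IsPartitionOf

variable {α β : Set (Set E)} {A : Set E}

theorem sUnion_eq_compl (h : IsPartitionOf (insert A α)) (hA : A ∉ α) : ⋃₀ α = Aᶜ := by
  ext x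
  constructor
  · rintro ⟨X, hX, hxX⟩ hxA
    have hXA : X ≠ A := ne_of_mem_of_not_mem hX hA
    exact disjoint_left.1 (h.2.1 (mem_insert_of_mem A hX) (mem_insert A α) hXA) hxX hxA
  · intro hxA
    have hx : x ∈ ⋃₀ insert A α := h.2.2 ▸ mem_univ x
    rw [sUnion_insert] at hx
    exact hx.resolve_left hxA

theorem subset_compl (h : IsPartitionOf (insert A α)) (hA : A ∉ α) {X : Set E} (hX : X ∈ α) :
    X ⊆ Aᶜ :=
  h.sUnion_eq_compl hA ▸ subset_sUnion_of_mem hX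

theorem merge (h₁ : IsPartitionOf (insert A α)) (h₂ : IsPartitionOf (insert Aᶜ β))
    (hA : A ∉ α) (hB : Aᶜ ∉ β) : IsPartitionOf (α ∪ β) := by
  have hβ : ⋃₀ β = A := by rw [h₂.sUnion_eq_compl hB, compl_compl]
  refine ⟨?_, ?_, ?_⟩
  · rintro X (hX | hX)
    exacts [h₁.1 X (mem_insert_of_mem A hX), h₂.1 X (mem_insert_of_mem Aᶜ hX)]
  · refine pairwiseDisjoint_union.2 ⟨h₁.2.1.subset (subset_insert A α),
      h₂.2.1.subset (subset_insert Aᶜ β), fun X hX Y hY _ => ?_⟩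
    exact disjoint_compl_left.mono (h₁.subset_compl hA hX) (hβ ▸ subset_sUnion_of_mem hY)
  · rw [sUnion_union, h₁.sUnion_eq_compl hA, hβ, compl_union_self]

theorem three_le_ncard [Finite E] (h : IsPartitionOf (insert A α)) (hA : A ∉ α)
    (hAc : Aᶜ.Nonempty) (hα : α ≠ {Aᶜ}) : 3 ≤ (insert A α).ncard := by
  rw [ncard_insert_of_notMem hA]
  by_contra! hle
  rcases (ncard_le_one_iff_eq (s := α)).1 (by omega) with rfl | ⟨X, rfl⟩
  · exact hAc.ne_empty (by rw [← h.sUnion_eq_compl hA, sUnion_empty])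
  · rw [← h.sUnion_eq_compl hA, sUnion_singleton] at hα
    exact hα rfl

end IsPartitionOf

theorem MergeClosure.isPartitionOf {P : Set (Set (Set E))} (hP : ∀ μ ∈ P, IsPartitionOf μ)
    {μ : Set (Set E)} (h : MergeClosure P μ) : IsPartitionOf μ := by
  induction h with
  | base hμ => exact hP _ hμ
  | merge hA hB _ _ ih₁ ih₂ => exact ih₁.merge ih₂ hA hB

/-- `β = (γ|μ|A)` for some `(γ|C) ∈ P` with at least three parts and `(Cᶜ|μ|A) ∈ P↑`. -/
def Decomposable (P : Set (Set (Set E))) (β : Set (Set E)) (A : Set E) : Prop :=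
  ∃ (γ μ : Set (Set E)) (C : Set E), C ∉ γ ∧ insert C γ ∈ P ∧ 3 ≤ (insert C γ).ncard ∧
    MergeClosure P (insert Cᶜ (insert A μ)) ∧ β \ {A} = γ ∪ μ

section Merge

variable [Finite E] {P : Set (Set (Set E))} {α₀ β₀ : Set (Set E)} {A₀ A : Set E}

theorem decomposable_merge_of_mem_left (hP : ∀ μ ∈ P, IsPartitionOf μ)
    (hA₀ : A₀ ∉ α₀) (hB₀ : A₀ᶜ ∉ β₀)
    (m₁ : MergeClosure P (insert A₀ α₀)) (m₂ : MergeClosure P (insert A₀ᶜ β₀))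
    (ih₁ : insert A₀ α₀ ∉ P → Decomposable P (insert A₀ α₀) A)
    (ih₂ : insert A₀ᶜ β₀ ∉ P → Decomposable P (insert A₀ᶜ β₀) A₀ᶜ)
    (hA : A ∈ α₀) (hnP : α₀ ∪ β₀ ∉ P) : Decomposable P (α₀ ∪ β₀) A := by
  have p₁ := m₁.isPartitionOf hP
  have p₂ := m₂.isPartitionOf hP
  have hβ₀ : ∀ X ∈ β₀, X ⊆ A₀ := fun X hX => compl_compl A₀ ▸ p₂.subset_compl hB₀ hX
  have hAβ₀ : A ∉ β₀ := fun h => by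
    obtain ⟨x, hx⟩ := p₁.1 A (mem_insert_of_mem A₀ hA)
    exact p₁.subset_compl hA₀ hA hx (hβ₀ A h hx)
  have hdiff : (α₀ ∪ β₀) \ {A} = β₀ ∪ (α₀ \ {A}) := by
    rw [union_sdiff_distrib, sdiff_singleton_eq_self hAβ₀, union_comm]
  have hα₀ : insert A (α₀ \ {A}) = α₀ := insert_sdiff_self_of_mem hA
  by_cases hb : β₀ = {A₀}
  · rw [hb, union_singleton] at hnP ⊢
    exact ih₁ hnP
  have h3 : 3 ≤ (insert A₀ᶜ β₀).ncard :=
    p₂.three_le_ncard hB₀ (by rw [compl_compl]; exact p₁.1 A₀ (mem_insert A₀ α₀))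
      (by rwa [compl_compl])
  by_cases hmem : insert A₀ᶜ β₀ ∈ P
  · refine ⟨β₀, α₀ \ {A}, A₀ᶜ, hB₀, hmem, h3, ?_, hdiff⟩
    rwa [compl_compl, hα₀]
  obtain ⟨γ, μ, C, hCγ, hCP, hC3, hmc, hsplit⟩ := ih₂ hmem
  rw [insert_sdiff_self_of_notMem hB₀] at hsplit
  have hCA₀ : C ≠ A₀ := by
    obtain ⟨X, hX⟩ : γ.Nonempty := nonempty_iff_ne_empty.2 fun h => by simp [h] at hC3
    obtain ⟨x, hx⟩ := (hP _ hCP).1 X (mem_insert_of_mem C hX)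
    rintro rfl
    exact (hP _ hCP).subset_compl hCγ hX hx (hβ₀ X (hsplit ▸ mem_union_left μ hX) hx)
  have hμ : A₀ᶜ ∉ insert Cᶜ μ := by
    rintro (h | h)
    · exact hCA₀ (compl_injective h.symm)
    · exact hB₀ (hsplit ▸ mem_union_right γ h)
  have hmerged := MergeClosure.merge hμ (by rwa [compl_compl]) (by rwa [insert_comm])
    (by rwa [compl_compl] : MergeClosure P (insert A₀ᶜᶜ α₀))
  refine ⟨γ, μ ∪ (α₀ \ {A}), C, hCγ, hCP, hC3, ?_, by rw [hdiff, hsplit, union_assoc]⟩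
  rwa [← union_insert, hα₀, ← insert_union]

end Merge

theorem MergeClosure.decomposable [Finite E] {P : Set (Set (Set E))}
    (hP : ∀ μ ∈ P, IsPartitionOf μ) {β : Set (Set E)} (h : MergeClosure P β) (hnP : β ∉ P)
    {A : Set E} (hA : A ∈ β) : Decomposable P β A := by
  induction h generalizing A with
  | base hβ => exact absurd hβ hnP
  | @merge α₀ β₀ A₀ hA₀ hB₀ m₁ m₂ ih₁ ih₂ =>
    rcases hA with hA | hA
    · exact decomposable_merge_of_mem_left hP hA₀ hB₀ m₁ m₂ (ih₁ · (mem_insert_of_mem A₀ hA))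
        (ih₂ · (mem_insert A₀ᶜ β₀)) hA hnP
    · rw [← compl_compl A₀] at hA₀ m₁ ih₁
      rw [union_comm] at hnP ⊢
      exact decomposable_merge_of_mem_left hP hB₀ hA₀ m₂ m₁ (ih₂ · (mem_insert_of_mem A₀ᶜ hA))
        (ih₁ · (mem_insert A₀ᶜᶜ α₀)) hA hnP

/-- any `(α|A) ∈ P↑ \ P` is decomposed by some `(γ|C) ∈ P` with at
least three parts, via some `(Cᶜ|μ|A) ∈ P↑` with `(α|A) = (γ|μ|A)`. -/
theorem mergeClosure_decompose [Finite E]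
    (P : Set (Set (Set E))) (hP : ∀ μ ∈ P, IsPartitionOf μ)
    (α : Set (Set E)) (A : Set E) (hA : A ∉ α)
    (h1 : MergeClosure P (insert A α)) (h2 : insert A α ∉ P) :
    ∃ (γ μ : Set (Set E)) (C : Set E), C ∉ γ ∧ insert C γ ∈ P ∧
      3 ≤ (insert C γ).ncard ∧
      MergeClosure P (insert Cᶜ (insert A μ)) ∧ α = γ ∪ μ := by
  obtain ⟨γ, μ, C, hCγ, hCP, hC3, hmc, hsplit⟩ := h1.decomposable hP h2 (mem_insert A α)
  rw [insert_sdiff_self_of_notMem hA] at hsplit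
  exact ⟨γ, μ, C, hCγ, hCP, hC3, hmc, hsplit⟩
end

section
/- A set of partitions P of a finite set E is pushing if and only if there exists a weakly submodular partition function Ψ and k ∈ ℝ ∪ {+∞} such that P = {μ : Ψ(μ) ≤ k}. -/
open Set

variable {E : Type*}

/-!
Pushing is the shadow of weak submodularity on a sublevel set: a weakly submodular `Ψ`
supplies an `F` that does not raise `Ψ` on one side, and pushing `F` turns a partition into a
partition. Conversely, a pushing `P` is the `0`-sublevel set of the function that is `0` on `P`
and `⊤` off it: a member outside `P` has value `⊤`, so no `F` can raise it.
-/

namespace IsPartitionOf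

variable {α : Set (Set E)} {A : Set E}

theorem pairwiseDisjoint_insert_union_removeF (hA : A ∉ α) (hp : IsPartitionOf (insert A α))
    (F : Set E) : (insert (A ∪ F) (RemoveF α F)).PairwiseDisjoint id := by
  have hdisj := hp.2.1
  refine Set.PairwiseDisjoint.insert ?_ ?_
  · rintro _ ⟨X, hX, rfl, -⟩ _ ⟨Y, hY, rfl, -⟩ hXY
    have hXY : X ≠ Y := by rintro rfl; exact hXY rfl
    exact (hdisj (mem_insert_of_mem _ hX) (mem_insert_of_mem _ hY) hXY).mono
      sdiff_subset sdiff_subset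
  · rintro _ ⟨X, hX, rfl, -⟩ -
    have hAX : A ≠ X := by rintro rfl; exact hA hX
    exact ((hdisj (mem_insert _ _) (mem_insert_of_mem _ hX) hAX).mono_right sdiff_subset).union_left
      disjoint_sdiff_right

theorem sUnion_insert_union_removeF (hp : IsPartitionOf (insert A α)) (F : Set E) :
    ⋃₀ insert (A ∪ F) (RemoveF α F) = univ := by
  refine eq_univ_of_forall fun x => ?_
  by_cases hxF : x ∈ F
  · exact ⟨A ∪ F, mem_insert _ _, Or.inr hxF⟩
  obtain ⟨X, hX | hX, hxX⟩ := hp.2.2.symm ▸ mem_univ x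
  · exact ⟨A ∪ F, mem_insert _ _, Or.inl (hX ▸ hxX)⟩
  · exact ⟨X \ F, mem_insert_of_mem _ ⟨X, hX, rfl, x, hxX, hxF⟩, hxX, hxF⟩

theorem insert_union_removeF (hA : A ∉ α) (hp : IsPartitionOf (insert A α)) (F : Set E) :
    IsPartitionOf (insert (A ∪ F) (RemoveF α F)) := by
  refine ⟨?_, hp.pairwiseDisjoint_insert_union_removeF hA F, hp.sUnion_insert_union_removeF F⟩
  rintro _ (rfl | ⟨X, -, rfl, hX⟩)
  · exact (hp.1 A (mem_insert _ _)).mono subset_union_left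
  · exact hX

end IsPartitionOf

theorem WeaklySubmodular.pushing_sublevel {Ψ : Set (Set E) → EReal} (hΨ : WeaklySubmodular Ψ)
    (k : EReal) : Pushing {μ | IsPartitionOf μ ∧ Ψ μ ≤ k} := by
  rintro α β A B hA hB ⟨hpA, hΨA⟩ ⟨hpB, hΨB⟩ hAB
  obtain ⟨F, hF, hFAB, hle | hle⟩ := hΨ α β A B hA hB hpA hpB hAB
  · exact ⟨F, hF, hFAB, Or.inl ⟨hpA.insert_union_removeF hA F, hle.trans hΨA⟩⟩
  · exact ⟨F, hF, hFAB, Or.inr ⟨hpB.insert_union_removeF hB F, hle.trans hΨB⟩⟩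

theorem Pushing.weaklySubmodular_indicator_compl {P : Set (Set (Set E))} (hP : Pushing P) :
    WeaklySubmodular (Pᶜ.indicator fun _ => (⊤ : EReal)) := by
  intro α β A B hA hB hpA hpB hAB
  by_cases hαP : insert A α ∈ P
  · by_cases hβP : insert B β ∈ P
    · obtain ⟨F, hF, hFAB, hα | hβ⟩ := hP α β A B hA hB hαP hβP hAB
      · exact ⟨F, hF, hFAB, Or.inl (by simp [hα, hαP])⟩
      · exact ⟨F, hF, hFAB, Or.inr (by simp [hβ, hβP])⟩
    · exact ⟨_, hAB, subset_rfl, Or.inr (by simp [hβP])⟩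
  · exact ⟨_, hAB, subset_rfl, Or.inl (by simp [hαP])⟩

theorem eq_setOf_indicator_compl_le_zero {P : Set (Set (Set E))}
    (hP : ∀ μ ∈ P, IsPartitionOf μ) :
    P = {μ | IsPartitionOf μ ∧ Pᶜ.indicator (fun _ => (⊤ : EReal)) μ ≤ 0} := by
  ext μ
  by_cases hμ : μ ∈ P
  · simp [hμ, hP μ hμ]
  · simp [hμ]

theorem pushing_iff_weaklySubmodular_general
    (P : Set (Set (Set E))) (hP : ∀ μ ∈ P, IsPartitionOf μ) :
    Pushing P ↔ ∃ Ψ : Set (Set E) → EReal, WeaklySubmodular Ψ ∧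
      ∃ k : EReal, k ≠ ⊥ ∧ P = {μ | IsPartitionOf μ ∧ Ψ μ ≤ k} := by
  constructor
  · intro hpush
    exact ⟨_, hpush.weaklySubmodular_indicator_compl, 0, EReal.zero_ne_bot,
      eq_setOf_indicator_compl_le_zero hP⟩
  · rintro ⟨Ψ, hΨ, k, -, rfl⟩
    exact hΨ.pushing_sublevel k

/-- a set of partitions `P` is pushing iff it is the set of
partitions of value at most `k` of some weakly submodular partition function,
for some `k ∈ ℝ ∪ {+∞}`. -/
theorem pushing_iff_weaklySubmodular [Finite E]
    (P : Set (Set (Set E))) (hP : ∀ μ ∈ P, IsPartitionOf μ) :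
    Pushing P ↔ ∃ Ψ : Set (Set E) → EReal, WeaklySubmodular Ψ ∧
      ∃ k : EReal, k ≠ ⊥ ∧ P = {μ | IsPartitionOf μ ∧ Ψ μ ≤ k} :=
  pushing_iff_weaklySubmodular_general P hP
end

section
/- Every submodular partition function in the old (Amini et al.) sense is weakly submodular in the new sense: if for partitions (α|A), (B|β) there exists A ⊊ F ⊆ (B∖A)^c with Ψ(α|A) > Ψ(α∖F|A∪F), or Ψ(β|B) ≥ Ψ(β∖A^c|B∪A^c), then, provided A^c ∩ B^c ≠ ∅, there exists a nonempty F' ⊆ A^c ∩ B^c with Ψ(α|A) ≥ Ψ(α∖F'|A∪F') or Ψ(β|B) ≥ Ψ(β∖F'|B∪F'). -/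
/-! Since the other parts of a partition `(α|A)` avoid `A`, pushing `F` into `A` yields the same
partition as pushing only `F \ A`. The first alternative thus gives `F' = F \ A`, and the second
gives `F' = Aᶜ ∩ Bᶜ = Aᶜ \ B`, applied to `(β|B)`. -/

open Set

variable {E : Type*}

theorem IsPartitionOf.disjoint_of_mem_insert {α : Set (Set E)} {A X : Set E} (hA : A ∉ α)
    (hp : IsPartitionOf (insert A α)) (hX : X ∈ α) : Disjoint X A :=
  hp.2.1 (mem_insert_of_mem A hX) (mem_insert A α) (ne_of_mem_of_not_mem hX hA)

theorem removeF_congr {α : Set (Set E)} {F G : Set E} (h : ∀ X ∈ α, X \ F = X \ G) :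
    RemoveF α F = RemoveF α G := by
  ext Y
  constructor <;> rintro ⟨X, hX, rfl, hne⟩
  · exact ⟨X, hX, h X hX, hne⟩
  · exact ⟨X, hX, (h X hX).symm, hne⟩

theorem removeF_sdiff_of_disjoint {α : Set (Set E)} {A : Set E} (F : Set E)
    (h : ∀ X ∈ α, Disjoint X A) : RemoveF α (F \ A) = RemoveF α F :=
  removeF_congr fun X hX => by rw [sdiff_sdiff_right, (h X hX).inter_eq, union_empty]

theorem insert_union_removeF_sdiff {α : Set (Set E)} {A : Set E} (F : Set E) (hA : A ∉ α)
    (hp : IsPartitionOf (insert A α)) :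
    insert (A ∪ (F \ A)) (RemoveF α (F \ A)) = insert (A ∪ F) (RemoveF α F) := by
  rw [union_sdiff_self,
    removeF_sdiff_of_disjoint F fun _ hX => hp.disjoint_of_mem_insert hA hX]

theorem old_weak_implies_new_weak_general
    (Ψ : Set (Set E) → EReal)
    (α β : Set (Set E)) (A B : Set E) (hA : A ∉ α) (hB : B ∉ β)
    (hpa : IsPartitionOf (insert A α)) (hpb : IsPartitionOf (insert B β))
    (hover : (Aᶜ ∩ Bᶜ).Nonempty)
    (h : (∃ F, A ⊂ F ∧ F ⊆ (B \ A)ᶜ ∧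
            Ψ (insert (A ∪ F) (RemoveF α F)) < Ψ (insert A α)) ∨
         Ψ (insert (B ∪ Aᶜ) (RemoveF β Aᶜ)) ≤ Ψ (insert B β)) :
    ∃ F', F'.Nonempty ∧ F' ⊆ Aᶜ ∩ Bᶜ ∧
      (Ψ (insert (A ∪ F') (RemoveF α F')) ≤ Ψ (insert A α) ∨
       Ψ (insert (B ∪ F') (RemoveF β F')) ≤ Ψ (insert B β)) := by
  rcases h with ⟨F, hAF, hFB, hlt⟩ | hle
  · refine ⟨F \ A, nonempty_of_ssubset hAF,
      fun x ⟨hxF, hxA⟩ => ⟨hxA, fun hxB => hFB hxF ⟨hxB, hxA⟩⟩, Or.inl ?_⟩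
    rw [insert_union_removeF_sdiff F hA hpa]
    exact hlt.le
  · refine ⟨Aᶜ ∩ Bᶜ, hover, subset_rfl, Or.inr ?_⟩
    rwa [← sdiff_eq, insert_union_removeF_sdiff Aᶜ hB hpb]

/-- every submodular partition function in the old (Amini et al.)
sense is weakly submodular in the new sense. -/
theorem old_weak_implies_new_weak [Finite E]
    (Ψ : Set (Set E) → EReal)
    (α β : Set (Set E)) (A B : Set E) (hA : A ∉ α) (hB : B ∉ β)
    (hpa : IsPartitionOf (insert A α)) (hpb : IsPartitionOf (insert B β))
    (hover : (Aᶜ ∩ Bᶜ).Nonempty)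
    (h : (∃ F, A ⊂ F ∧ F ⊆ (B \ A)ᶜ ∧
            Ψ (insert (A ∪ F) (RemoveF α F)) < Ψ (insert A α)) ∨
         Ψ (insert (B ∪ Aᶜ) (RemoveF β Aᶜ)) ≤ Ψ (insert B β)) :
    ∃ F', F'.Nonempty ∧ F' ⊆ Aᶜ ∩ Bᶜ ∧
      (Ψ (insert (A ∪ F') (RemoveF α F')) ≤ Ψ (insert A α) ∨
       Ψ (insert (B ∪ F') (RemoveF β F')) ≤ Ψ (insert B β)) :=
  old_weak_implies_new_weak_general Ψ α β A B hA hB hpa hpb hover h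
end

section
/- For every connectivity function f on a finite set E, the partition function max_f is weakly submodular: for all partitions (α|A) and (B|β) of E with A^c ∩ B^c ≠ ∅, there exists a nonempty F ⊆ A^c ∩ B^c such that max_f(α|A) ≥ max_f(α∖F|A∪F) or max_f(B|β) ≥ max_f(B∪F|β∖F). -/
open Set

variable {E : Type*}

/-!
Put `F₀ = Aᶜ ∩ Bᶜ`. Submodularity at `A, Bᶜ` and symmetry give
`f (A ∪ F₀) + f (B ∪ F₀) ≤ f A + f B`, so by symmetry we may assume `f (A ∪ F₀) ≤ f A`.
Choose `F ⊆ F₀` inclusion-minimal among the nonempty sets with `f (A ∪ F) ≤ f (A ∪ F₀)`.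
For a part `C` of `α`, posimodularity `f (C \ X) + f (X \ C) ≤ f C + f X` at `X = A ∪ F` yields
`f (C \ F) ≤ f C`: either `F \ C` is a nonempty proper subset of `F`, so that
`f (A ∪ (F \ C)) > f (A ∪ F)`, or `F ⊆ C` and the finite value `f A` cancels.
If instead `f A = ⊥`, posimodularity forces `f = ⊥` on all subsets of `A` or on all subsets
of `Aᶜ`, and then `F₀` itself brings one of the two sides down to `⊥`.
-/

lemma EReal.le_or_le_of_add_le_add {a b c d : EReal} (h : a + b ≤ c + d) : a ≤ c ∨ b ≤ d := by
  by_contra! hlt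
  exact (EReal.add_lt_add hlt.1 hlt.2).not_ge h

lemma exists_nonempty_subset_le_and_forall_ssubset_lt [Finite E] {β : Type*} [LinearOrder β]
    (g : Set E → β) {S : Set E} (hS : S.Nonempty) :
    ∃ F ⊆ S, F.Nonempty ∧ g F ≤ g S ∧ ∀ G ⊂ F, G.Nonempty → g F < g G := by
  obtain ⟨F, ⟨hFS, hF, hFle⟩, hmin⟩ :=
    (toFinite {G | G ⊆ S ∧ G.Nonempty ∧ g G ≤ g S}).exists_minimal ⟨S, subset_rfl, hS, le_rfl⟩
  refine ⟨F, hFS, hF, hFle, fun G hGF hG => hFle.trans_lt (not_le.1 fun hGle => ?_)⟩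
  exact hGF.not_subset (hmin ⟨hGF.subset.trans hFS, hG, hGle⟩ hGF.subset)

lemma IsPartitionOf.disjoint_of_mem {α : Set (Set E)} {A : Set E}
    (h : IsPartitionOf (insert A α)) (hA : A ∉ α) : ∀ C ∈ α, Disjoint C A := fun _ hC =>
  h.2.1 (mem_insert_of_mem _ hC) (mem_insert _ _) fun hCA => hA (hCA ▸ hC)

namespace ConnFn

variable {f : Set E → EReal}

lemma posimodular (hf : ConnFn f) (X Y : Set E) : f (X \ Y) + f (Y \ X) ≤ f X + f Y := by
  have h := hf.2 Xᶜ Y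
  rwa [← hf.1 X, hf.1 (Xᶜ ∪ Y), compl_union, compl_compl, ← sdiff_eq_compl_inter,
    inter_comm, ← sdiff_eq_compl_inter] at h

lemma union_inter_compl_le_or (hf : ConnFn f) (A B : Set E) :
    f (A ∪ (Aᶜ ∩ Bᶜ)) ≤ f A ∨ f (B ∪ (Aᶜ ∩ Bᶜ)) ≤ f B := by
  refine EReal.le_or_le_of_add_le_add ?_
  have hA : A ∪ (Aᶜ ∩ Bᶜ) = A ∪ Bᶜ := by
    rw [union_inter_distrib_left, union_compl_self, univ_inter]
  have hB : (B ∪ (Aᶜ ∩ Bᶜ))ᶜ = A ∩ Bᶜ := by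
    ext x; simp only [mem_compl_iff, mem_union, mem_inter_iff]; tauto
  rw [hA, hf.1 (B ∪ _), hB, hf.1 B]
  exact hf.2 A Bᶜ

lemma forall_subset_eq_bot_or (hf : ConnFn f) {A : Set E} (hA : f A = ⊥) :
    (∀ U ⊆ A, f U = ⊥) ∨ ∀ V ⊆ Aᶜ, f V = ⊥ := by
  by_contra! h
  obtain ⟨⟨U, hUA, hU⟩, ⟨V, hVA, hV⟩⟩ := h
  have h := hf.posimodular A (V ∪ (A \ U))
  have hdiff : A \ (V ∪ (A \ U)) = U := by
    ext x; have := @hUA x; have := @hVA x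
    simp only [mem_sdiff, mem_union, mem_compl_iff] at *; tauto
  have hdiff' : (V ∪ (A \ U)) \ A = V := by
    ext x; have := @hVA x
    simp only [mem_sdiff, mem_union, mem_compl_iff] at *; tauto
  rw [hdiff, hdiff', hA, EReal.bot_add, le_bot_iff, EReal.add_eq_bot_iff] at h
  exact h.elim hU hV

lemma map_sdiff_le_of_forall_ssubset_lt (hf : ConnFn f) {A C F : Set E} (hCA : Disjoint C A) (hA : f A ≠ ⊥)
    (hA' : f A ≠ ⊤) (hAF : f (A ∪ F) ≤ f A)
    (hmin : ∀ G ⊂ F, G.Nonempty → f (A ∪ F) < f (A ∪ G)) : f (C \ F) ≤ f C := by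
  have key := hf.posimodular C (A ∪ F)
  rw [← sdiff_sdiff, hCA.sdiff_eq_left, union_sdiff_distrib, hCA.symm.sdiff_eq_left] at key
  by_cases hFC : F ⊆ C
  · lift f A to ℝ using ⟨hA', hA⟩ with a ha
    rw [sdiff_eq_empty.2 hFC, union_empty, ← ha] at key
    exact (EReal.addLECancellable_coe a).add_le_add_iff_right.1 (key.trans (by gcongr))
  by_cases hdisj : Disjoint C F
  · rw [hdisj.sdiff_eq_left]
  have hlt := hmin (F \ C) (sdiff_ssubset_left_iff.2 (not_disjoint_iff_nonempty_inter.1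
    (fun h => hdisj h.symm))) (sdiff_nonempty.2 hFC)
  exact (EReal.le_or_le_of_add_le_add key).resolve_right hlt.not_ge

end ConnFn

section maxPF

variable {f : Set E → EReal} {α : Set (Set E)} {A : Set E}

lemma le_maxPF {μ : Set (Set E)} {X : Set E} (hX : X ∈ μ) : f X ≤ maxPF f μ :=
  le_sSup (mem_image_of_mem f hX)

lemma maxPF_insert_union_removeF_le {F : Set E} {c : EReal}
    (hA : f (A ∪ F) ≤ c) (hα : ∀ C ∈ α, f (C \ F) ≤ c) :
    maxPF f (insert (A ∪ F) (RemoveF α F)) ≤ c := by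
  refine sSup_le ?_
  rintro _ ⟨X, hX | ⟨C, hC, rfl, -⟩, rfl⟩
  · exact hX ▸ hA
  · exact hα C hC

lemma maxPF_insert_union_removeF_eq_bot (hf : ConnFn f) (hd : ∀ C ∈ α, Disjoint C A)
    {F : Set E} (h : ∀ V ⊆ (A ∪ F)ᶜ, f V = ⊥) :
    maxPF f (insert (A ∪ F) (RemoveF α F)) = ⊥ := by
  refine le_bot_iff.1 (maxPF_insert_union_removeF_le ?_ fun C hC => (h _ ?_).le)
  · rw [hf.1, h _ subset_rfl]
  · intro x ⟨hxC, hxF⟩ hxAF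
    exact hxAF.elim (disjoint_left.1 (hd C hC) hxC) hxF

lemma maxPF_insert_union_removeF_eq_bot_or (hf : ConnFn f) {β : Set (Set E)} {B : Set E}
    (hdA : ∀ C ∈ α, Disjoint C A) (hdB : ∀ C ∈ β, Disjoint C B) (hA : f A = ⊥) :
    maxPF f (insert (A ∪ (Aᶜ ∩ Bᶜ)) (RemoveF α (Aᶜ ∩ Bᶜ))) = ⊥ ∨
      maxPF f (insert (B ∪ (Aᶜ ∩ Bᶜ)) (RemoveF β (Aᶜ ∩ Bᶜ))) = ⊥ := by
  refine (hf.forall_subset_eq_bot_or hA).symm.imp (fun h => ?_) (fun h => ?_)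
  · exact maxPF_insert_union_removeF_eq_bot hf hdA fun V hV =>
      h V (hV.trans (compl_subset_compl.2 subset_union_left))
  · refine maxPF_insert_union_removeF_eq_bot hf hdB fun V hV => h V (hV.trans fun x hx => ?_)
    simp only [mem_compl_iff, mem_union, mem_inter_iff] at hx
    tauto

lemma exists_maxPF_insert_union_removeF_le [Finite E] (hf : ConnFn f)
    (hd : ∀ C ∈ α, Disjoint C A) {F₀ : Set E} (hF₀ : F₀.Nonempty) (hA : f A ≠ ⊥)
    (hle : f (A ∪ F₀) ≤ f A) :
    ∃ F ⊆ F₀, F.Nonempty ∧ maxPF f (insert (A ∪ F) (RemoveF α F)) ≤ maxPF f (insert A α) := by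
  have hAmax : f A ≤ maxPF f (insert A α) := le_maxPF (mem_insert _ _)
  by_cases hA' : f A = ⊤
  · exact ⟨F₀, subset_rfl, hF₀, le_top.trans (hA' ▸ hAmax)⟩
  obtain ⟨F, hFF₀, hF, hFle, hmin⟩ :=
    exists_nonempty_subset_le_and_forall_ssubset_lt (fun G => f (A ∪ G)) hF₀
  have hAF := hFle.trans hle
  refine ⟨F, hFF₀, hF, maxPF_insert_union_removeF_le (hAF.trans hAmax) fun C hC => ?_⟩
  exact (hf.map_sdiff_le_of_forall_ssubset_lt (hd C hC) hA hA' hAF hmin).trans (le_maxPF (mem_insert_of_mem _ hC))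

end maxPF

/-- for every connectivity function `f`, the partition function
`max_f` is weakly submodular. -/
theorem maxPF_weaklySubmodular [Finite E]
    (f : Set E → EReal) (hf : ConnFn f) :
    WeaklySubmodular (maxPF f) := by
  intro α β A B hAα hBβ hpA hpB hne
  wlog hle : f (A ∪ (Aᶜ ∩ Bᶜ)) ≤ f A generalizing α β A B
  · have hle' := (hf.union_inter_compl_le_or A B).resolve_left hle
    rw [inter_comm] at hne hle'
    obtain ⟨F, hF, hFsub, h⟩ := this β α B A hBβ hAα hpB hpA hne hle'
    exact ⟨F, hF, inter_comm Bᶜ Aᶜ ▸ hFsub, h.symm⟩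
  have hdA := hpA.disjoint_of_mem hAα
  by_cases hA : f A = ⊥
  · refine ⟨_, hne, subset_rfl, ?_⟩
    exact (maxPF_insert_union_removeF_eq_bot_or hf hdA (hpB.disjoint_of_mem hBβ) hA).imp
      (fun h => h.trans_le bot_le) (fun h => h.trans_le bot_le)
  obtain ⟨F, hFsub, hF, h⟩ := exists_maxPF_insert_union_removeF_le hf hdA hne hA hle
  exact ⟨F, hF, hFsub, Or.inl h⟩
end

section
/- Let Q be a set of partitions of E containing no small partition for a given downward-closed family S. If Br is an inclusion-wise minimal upward-closed family of big subsets of E that contains a big part of every partition in Q, and Q is refining, then the elements of Br pairwise intersect (so Br is a big Q-bramble). -/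
open Set

variable {E : Type*}

/-! Minimality of `Br` forces each minimal member `X` to be the only member of `Br` in some
partition of `Q` (else `Br \ {X}` would be a smaller family with the same properties); two such
partitions for disjoint minimal members are then refined into a partition of `Q` missing `Br`. -/

theorem Finer.exists_superset {α β : Set (Set E)} (h : Finer α β) :
    ∀ P ∈ α, ∃ B ∈ β, P ⊆ B := by
  induction h with
  | refl => exact fun P hP => ⟨P, hP, subset_rfl⟩
  | tail _ step ih =>
    intro P hP
    rcases step with ⟨B, hB, b, -, rfl⟩ | ⟨B, hB, δ, -, -, rfl, rfl⟩
    · rcases hP with hP | ⟨rfl, -⟩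
      · exact ih P hP.1
      · obtain ⟨G, hG, hBG⟩ := ih B hB
        exact ⟨G, hG, sdiff_subset.trans hBG⟩
    · rcases hP with hP | hP
      · exact ih P hP.1
      · obtain ⟨G, hG, hBG⟩ := ih _ hB
        exact ⟨G, hG, (subset_sUnion_of_mem hP).trans hBG⟩

theorem Refining.exists_finer_diff {Q : Set (Set (Set E))} (href : Refining Q)
    {μ ν : Set (Set E)} {A B : Set E} (hμ : μ ∈ Q) (hν : ν ∈ Q) (hA : A ∈ μ) (hB : B ∈ ν)
    (hAB : A ∩ B = ∅) : ∃ ρ ∈ Q, Finer ρ (μ \ {A} ∪ ν \ {B}) := by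
  refine href _ _ A B (fun h => h.2 rfl) (fun h => h.2 rfl) ?_ ?_ hAB
  · rwa [insert_sdiff_singleton, insert_eq_of_mem hA]
  · rwa [insert_sdiff_singleton, insert_eq_of_mem hB]

theorem diff_singleton_upClosed_of_minimal {Br : Set (Set E)}
    (hup : ∀ X ∈ Br, ∀ Y, X ⊆ Y → Y ∈ Br) {X : Set E} (hX : Minimal (· ∈ Br) X) :
    ∀ Z ∈ Br \ {X}, ∀ W, Z ⊆ W → W ∈ Br \ {X} := by
  rintro Z ⟨hZ, hZX⟩ W hZW
  refine ⟨hup Z hZ W hZW, ?_⟩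
  rintro rfl
  exact hZX (hX.eq_of_subset hZ hZW)

theorem exists_partition_unique_mem_of_minimal {Q : Set (Set (Set E))} {S Br : Set (Set E)}
    (hbig : ∀ X ∈ Br, X ∉ S)
    (hup : ∀ X ∈ Br, ∀ Y, X ⊆ Y → Y ∈ Br)
    (hmeets : ∀ μ ∈ Q, ∃ X ∈ μ, X ∈ Br)
    (hmin : ∀ Br', Br' ⊆ Br → (∀ X ∈ Br', X ∉ S) →
      (∀ X ∈ Br', ∀ Y, X ⊆ Y → Y ∈ Br') →
      (∀ μ ∈ Q, ∃ X ∈ μ, X ∈ Br') → Br' = Br)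
    {X : Set E} (hX : Minimal (· ∈ Br) X) :
    ∃ μ ∈ Q, X ∈ μ ∧ ∀ P ∈ μ, P ∈ Br → P = X := by
  by_contra! hcon
  have hmeets' : ∀ μ ∈ Q, ∃ P ∈ μ, P ∈ Br \ {X} := by
    intro μ hμ
    obtain ⟨P, hPμ, hPBr⟩ := hmeets μ hμ
    by_cases hPX : P = X
    · exact hcon μ hμ (hPX ▸ hPμ)
    · exact ⟨P, hPμ, hPBr, hPX⟩
  have hdiff : Br \ {X} = Br := hmin _ sdiff_subset (fun Z hZ => hbig Z hZ.1)
    (diff_singleton_upClosed_of_minimal hup hX) hmeets'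
  exact (hdiff ▸ hX.prop).2 rfl

theorem minimal_upclosed_is_bramble_general [Finite E]
    (Q : Set (Set (Set E)))
    (S : Set (Set E))
    (href : Refining Q)
    (Br : Set (Set E))
    (hbig : ∀ X ∈ Br, X ∉ S)
    (hup : ∀ X ∈ Br, ∀ Y, X ⊆ Y → Y ∈ Br)
    (hmeets : ∀ μ ∈ Q, ∃ X ∈ μ, X ∈ Br)
    (hmin : ∀ Br', Br' ⊆ Br → (∀ X ∈ Br', X ∉ S) →
      (∀ X ∈ Br', ∀ Y, X ⊆ Y → Y ∈ Br') →
      (∀ μ ∈ Q, ∃ X ∈ μ, X ∈ Br') → Br' = Br) :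
    ∀ X ∈ Br, ∀ Y ∈ Br, (X ∩ Y).Nonempty := by
  intro X hX Y hY
  by_contra hXY
  obtain ⟨X', hX'X, hX'⟩ := exists_minimal_le_of_wellFoundedLT (· ∈ Br) X hX
  obtain ⟨Y', hY'Y, hY'⟩ := exists_minimal_le_of_wellFoundedLT (· ∈ Br) Y hY
  have hdisj : X' ∩ Y' = ∅ :=
    subset_empty_iff.mp (not_nonempty_iff_eq_empty.mp hXY ▸ inter_subset_inter hX'X hY'Y)
  obtain ⟨μ, hμQ, hX'μ, hμuniq⟩ :=
    exists_partition_unique_mem_of_minimal hbig hup hmeets hmin hX'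
  obtain ⟨ν, hνQ, hY'ν, hνuniq⟩ :=
    exists_partition_unique_mem_of_minimal hbig hup hmeets hmin hY'
  obtain ⟨ρ, hρQ, hρ⟩ := href.exists_finer_diff hμQ hνQ hX'μ hY'ν hdisj
  obtain ⟨P, hPρ, hPBr⟩ := hmeets ρ hρQ
  obtain ⟨G, hG, hPG⟩ := hρ.exists_superset P hPρ
  rcases hG with ⟨hGμ, hGX'⟩ | ⟨hGν, hGY'⟩
  · exact hGX' (hμuniq G hGμ (hup P hPBr G hPG))
  · exact hGY' (hνuniq G hGν (hup P hPBr G hPG))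

/-- if `Q` is refining and has no small partition, any
inclusion-wise minimal upward-closed family of big sets meeting every
partition of `Q` is pairwise intersecting (hence a big `Q`-bramble). -/
theorem minimal_upclosed_is_bramble [Finite E]
    (Q : Set (Set (Set E))) (hQ : ∀ μ ∈ Q, IsPartitionOf μ)
    (S : Set (Set E)) (hS : DownClosed S)
    (hnosmall : ¬∃ μ ∈ Q, ∀ X ∈ μ, X ∈ S)
    (href : Refining Q)
    (Br : Set (Set E))
    (hbig : ∀ X ∈ Br, X ∉ S)
    (hup : ∀ X ∈ Br, ∀ Y, X ⊆ Y → Y ∈ Br)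
    (hmeets : ∀ μ ∈ Q, ∃ X ∈ μ, X ∈ Br)
    (hmin : ∀ Br', Br' ⊆ Br → (∀ X ∈ Br', X ∉ S) →
      (∀ X ∈ Br', ∀ Y, X ⊆ Y → Y ∈ Br') →
      (∀ μ ∈ Q, ∃ X ∈ μ, X ∈ Br') → Br' = Br) :
    ∀ X ∈ Br, ∀ Y ∈ Br, (X ∩ Y).Nonempty :=
  minimal_upclosed_is_bramble_general Q S href Br hbig hup hmeets hmin
end
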